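/- arXiv:0803.4381 — 2 statements merged into one kernel-verified Lean document; each statement's English description precedes it below -/
import Mathlib

section
/- Let A and B be monoids. The Schützenberger product A◊B is regular if and only if (i) A and B are regular, and (ii) for every (a,P,b) ∈ A◊B, either P = aP₁b or P = caP₁bd for some P₁ ⊆ A×B, c ∈ a⁻¹, d ∈ b⁻¹. -/
/-- A monoid is regular if every element has an inverse in the von Neumann sense. -/
def RegM (M : Type*) [Monoid M] : Prop := ∀ a : M, ∃ b : M, a * b * a = a ∧ b * a * b = b

section Sch
variable {A B : Type*} [Monoid A] [Monoid B]

/-- `Pb = {(c, db) : (c,d) ∈ P}` -/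
def sR (P : Set (A × B)) (b : B) : Set (A × B) := {q | ∃ p ∈ P, q = (p.1, p.2 * b)}

/-- `aP = {(ac, d) : (c,d) ∈ P}` -/
def sL (a : A) (P : Set (A × B)) : Set (A × B) := {q | ∃ p ∈ P, q = (a * p.1, p.2)}

/-- `aPb = {(ac, db) : (c,d) ∈ P}` -/
def sLR (a : A) (P : Set (A × B)) (b : B) : Set (A × B) :=
  {q | ∃ p ∈ P, q = (a * p.1, p.2 * b)}

/-- Multiplication of the Schützenberger product `A ◊ B`. -/
def sMul (x y : A × Set (A × B) × B) : A × Set (A × B) × B :=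
  (x.1 * y.1, sR x.2.1 y.2.2 ∪ sL x.1 y.2.1, x.2.2 * y.2.2)

/-- The identity of the Schützenberger product. -/
def sOne : A × Set (A × B) × B := (1, ∅, 1)

/-- Regularity of the Schützenberger product `A ◊ B`. -/
def SReg (A B : Type*) [Monoid A] [Monoid B] : Prop :=
  ∀ x : A × Set (A × B) × B, ∃ y : A × Set (A × B) × B,
    sMul (sMul x y) x = x ∧ sMul (sMul y x) y = y

end Sch

/-!
Both conditions say that `A` and `B` are groups. If `y` is an inverse of `x = (a, {(1, 1)}, 1)`,
then `(a y₁, 1)` lies in the middle component `{(1, 1)}` of `x y x`, so `a` has a right inverse;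
symmetrically every element of `B` has a left inverse. Conversely, condition (ii) for `P = A × B`
puts `(1, 1)` in `aP₁b` or in `caP₁bd`, and `ca`, `bd` are idempotents, which equal `1` as soon as
they are one-sided invertible; so again every element has a one-sided inverse. A monoid in which
every element is one-sided invertible is a group. For groups, `(a⁻¹, a⁻¹Pb⁻¹, b⁻¹)` is an inverse
of `(a, P, b)`, and `P = a (a⁻¹Pb⁻¹) b`.
-/

section OneSidedInverses
variable {M : Type*} [Monoid M]

lemma IsIdempotentElem.of_mul_mul_eq {a c : M} (h : a * c * a = a) :
    IsIdempotentElem (c * a) := by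
  simp only [IsIdempotentElem, mul_assoc] at h ⊢
  rw [h]

lemma IsIdempotentElem.eq_one_of_mul_eq_one {e u : M} (he : IsIdempotentElem e)
    (h : e * u = 1) : e = 1 :=
  calc e = e * (e * u) := by rw [h, mul_one]
    _ = 1 := by rw [← mul_assoc, he.eq, h]

lemma IsIdempotentElem.eq_one_of_mul_eq_one_left {e v : M} (he : IsIdempotentElem e)
    (h : v * e = 1) : e = 1 :=
  calc e = v * e * e := by rw [h, one_mul]
    _ = 1 := by rw [mul_assoc, he.eq, h]

lemma isUnit_of_forall_exists_one_sided_inv (h : ∀ a : M, (∃ u, a * u = 1) ∨ ∃ v, v * a = 1)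
    (a : M) : IsUnit a := by
  have idem_eq_one (e : M) (he : IsIdempotentElem e) : e = 1 :=
    (h e).elim (fun ⟨_, hu⟩ => he.eq_one_of_mul_eq_one hu)
      fun ⟨_, hv⟩ => he.eq_one_of_mul_eq_one_left hv
  rcases h a with ⟨u, hu⟩ | ⟨v, hv⟩
  · refine isUnit_iff_exists.2 ⟨u, hu, idem_eq_one _ (.of_mul_mul_eq ?_)⟩
    rw [hu, one_mul]
  · refine isUnit_iff_exists.2 ⟨v, idem_eq_one _ (.of_mul_mul_eq ?_), hv⟩
    rw [hv, one_mul]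

lemma regM_of_forall_isUnit (h : ∀ a : M, IsUnit a) : RegM M := fun a =>
  let ⟨c, hac, hca⟩ := isUnit_iff_exists.1 (h a)
  ⟨c, by rw [hac, one_mul], by rw [hca, one_mul]⟩

end OneSidedInverses

section Translations
variable {A B : Type*}

lemma sR_sR [Monoid B] (P : Set (A × B)) (d b : B) : sR (sR P d) b = sR P (d * b) := by
  ext; simp [sR, mul_assoc]

lemma sL_sL [Monoid A] (a c : A) (P : Set (A × B)) : sL a (sL c P) = sL (a * c) P := by
  ext; simpa [sL, mul_assoc] using exists_comm

@[simp]
lemma sR_one [Monoid B] (P : Set (A × B)) : sR P (1 : B) = P := by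
  ext; simp [sR]

@[simp]
lemma sL_one [Monoid A] (P : Set (A × B)) : sL (1 : A) P = P := by
  ext; simp [sL]

lemma sR_sL [Monoid A] [Monoid B] (a : A) (P : Set (A × B)) (b : B) :
    sR (sL a P) b = sL a (sR P b) := by
  ext; simpa [sR, sL] using exists_comm

lemma sLR_eq_sL_sR [Monoid A] [Monoid B] (a : A) (P : Set (A × B)) (b : B) :
    sLR a P b = sL a (sR P b) := by
  ext; simp [sLR, sL, sR]

end Translations

section Schuetzenberger
variable {A B : Type*} [Monoid A] [Monoid B]

lemma exists_inv_of_univ_eq_sLR {a : A} {P : Set (A × B)} {b : B} (h : Set.univ = sLR a P b) :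
    (∃ u, a * u = 1) ∧ ∃ v, v * b = 1 := by
  obtain ⟨p, -, hp⟩ : ((1 : A), (1 : B)) ∈ sLR a P b := h ▸ Set.mem_univ _
  exact ⟨⟨p.1, (Prod.mk.inj hp).1.symm⟩, ⟨p.2, (Prod.mk.inj hp).2.symm⟩⟩

lemma SReg.exists_right_inv (h : SReg A B) (a : A) : ∃ u, a * u = 1 := by
  set x : A × Set (A × B) × B := (a, {(1, 1)}, 1)
  obtain ⟨y, hxyx, -⟩ := h x
  have hmem : (a * y.1, (1 : B)) ∈ (sMul (sMul x y) x).2.1 :=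
    Or.inr ⟨(1, 1), rfl, by simp [x, sMul]⟩
  rw [hxyx] at hmem
  exact ⟨y.1, (Prod.mk.inj hmem).1⟩

lemma SReg.exists_left_inv (h : SReg A B) (b : B) : ∃ v, v * b = 1 := by
  set x : A × Set (A × B) × B := (1, {(1, 1)}, b)
  obtain ⟨y, hxyx, -⟩ := h x
  have hmem : ((1 : A), y.2.2 * b) ∈ (sMul (sMul x y) x).2.1 :=
    Or.inl ⟨(1, y.2.2), Or.inl ⟨(1, 1), rfl, by simp⟩, rfl⟩
  rw [hxyx] at hmem
  exact ⟨y.2.2, (Prod.mk.inj hmem).2⟩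

lemma SReg.isUnit_left (h : SReg A B) (a : A) : IsUnit a :=
  isUnit_of_forall_exists_one_sided_inv (fun a => .inl (h.exists_right_inv a)) a

lemma SReg.isUnit_right (h : SReg A B) (b : B) : IsUnit b :=
  isUnit_of_forall_exists_one_sided_inv (fun b => .inr (h.exists_left_inv b)) b

lemma sReg_of_forall_isUnit (hA : ∀ a : A, IsUnit a) (hB : ∀ b : B, IsUnit b) : SReg A B := by
  rintro ⟨a, P, b⟩
  obtain ⟨a', haa', ha'a⟩ := isUnit_iff_exists.1 (hA a)
  obtain ⟨b', hbb', hb'b⟩ := isUnit_iff_exists.1 (hB b)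
  refine ⟨(a', sLR a' P b', b'), ?_, ?_⟩ <;>
    simp [sMul, sLR_eq_sL_sR, sR_sL, sR_sR, sL_sL, haa', ha'a, hbb', hb'b]

/-- Condition (ii) of the theorem. -/
def MiddleFactors (A B : Type*) [Monoid A] [Monoid B] : Prop :=
  ∀ (a : A) (P : Set (A × B)) (b : B),
    (∃ P₁ : Set (A × B), P = sLR a P₁ b) ∨
    (∃ (P₁ : Set (A × B)) (c : A) (d : B),
      (a * c * a = a ∧ c * a * c = c) ∧ (b * d * b = b ∧ d * b * d = d) ∧
      P = sLR (c * a) P₁ (b * d))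

lemma MiddleFactors.isUnit_left (h : MiddleFactors A B) (a : A) : IsUnit a := by
  refine isUnit_of_forall_exists_one_sided_inv (fun a => ?_) a
  rcases h a Set.univ 1 with ⟨P₁, hP⟩ | ⟨P₁, c, d, ⟨hac, -⟩, -, hP⟩
  · exact .inl (exists_inv_of_univ_eq_sLR hP).1
  · obtain ⟨u, hu⟩ := (exists_inv_of_univ_eq_sLR hP).1
    exact .inr ⟨c, (IsIdempotentElem.of_mul_mul_eq hac).eq_one_of_mul_eq_one hu⟩

lemma MiddleFactors.isUnit_right (h : MiddleFactors A B) (b : B) : IsUnit b := by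
  refine isUnit_of_forall_exists_one_sided_inv (fun b => ?_) b
  rcases h 1 Set.univ b with ⟨P₁, hP⟩ | ⟨P₁, c, d, -, ⟨-, hdb⟩, hP⟩
  · exact .inr (exists_inv_of_univ_eq_sLR hP).2
  · obtain ⟨v, hv⟩ := (exists_inv_of_univ_eq_sLR hP).2
    exact .inl ⟨d, (IsIdempotentElem.of_mul_mul_eq hdb).eq_one_of_mul_eq_one_left hv⟩

lemma middleFactors_of_forall_isUnit (hA : ∀ a : A, IsUnit a) (hB : ∀ b : B, IsUnit b) :
    MiddleFactors A B := by
  intro a P b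
  obtain ⟨a', haa', -⟩ := isUnit_iff_exists.1 (hA a)
  obtain ⟨b', -, hb'b⟩ := isUnit_iff_exists.1 (hB b)
  refine .inl ⟨sLR a' P b', ?_⟩
  simp [sLR_eq_sL_sR, sR_sL, sR_sR, sL_sL, haa', hb'b]

end Schuetzenberger

/-- `A ◊ B` is regular iff `A` and `B` are regular and every middle component
has the form `aP₁b` or `caP₁bd`. -/
theorem schuetzenberger_regular_iff (A B : Type*) [Monoid A] [Monoid B] :
    SReg A B ↔
      (RegM A ∧ RegM B) ∧
      (∀ (a : A) (P : Set (A × B)) (b : B),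
        (∃ P₁ : Set (A × B), P = sLR a P₁ b) ∨
        (∃ (P₁ : Set (A × B)) (c : A) (d : B),
          (a * c * a = a ∧ c * a * c = c) ∧ (b * d * b = b ∧ d * b * d = d) ∧
          P = sLR (c * a) P₁ (b * d))) := by
  change SReg A B ↔ (RegM A ∧ RegM B) ∧ MiddleFactors A B
  constructor
  · intro h
    exact ⟨⟨regM_of_forall_isUnit h.isUnit_left, regM_of_forall_isUnit h.isUnit_right⟩,
      middleFactors_of_forall_isUnit h.isUnit_left h.isUnit_right⟩
  · rintro ⟨-, h⟩
    exact sReg_of_forall_isUnit h.isUnit_left h.isUnit_right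
end

section
/- Let f ∈ A^(⊕B), let b, d ∈ B with bdb = b and dbd = d, and suppose for every x ∈ B there is a_x ∈ A with (x)f = a_x·(xbd)f. If v ∈ A^(⊕B) satisfies fvf = f and vfv = v (pointwise), then with g = ᵈv one has f·ᵇg·ᵇᵈf = f and g·ᵈf·ᵈᵇg = g, where (x)(ᵘh) = (xu)h for u ∈ B. -/
section VSch
variable {A B : Type*} [Monoid A] [Monoid B]

/-- `Pb = {(h, cb) : (h,c) ∈ P}` -/
def vR (P : Set ((B → A) × B)) (b : B) : Set ((B → A) × B) :=
  {q | ∃ p ∈ P, q = (p.1, p.2 * b)}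

/-- The translate `ᵘh`, defined by `(x)(ᵘh) = (xu)h`. -/
def tr (u : B) (h : B → A) : B → A := fun x => h (x * u)

/-- Multiplication of the new version `A ◊ᵥ B` of the Schützenberger product:
`(f,P₁,b₁)(g,P₂,b₂) = (f·ᵇ¹g, P₁b₂ ∪ P₂, b₁b₂)`. -/
def vMul (x y : (B → A) × Set ((B → A) × B) × B) : (B → A) × Set ((B → A) × B) × B :=
  (x.1 * tr x.2.2 y.1, vR x.2.1 y.2.2 ∪ y.2.1, x.2.2 * y.2.2)

/-- The identity of `A ◊ᵥ B`. -/
def vOne : (B → A) × Set ((B → A) × B) × B := (1, ∅, 1)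

/-- Membership in `A ◊ᵥ B = A^(⊕B) × P(A^(⊕B) × B) × B`: all function components
are finitely supported. -/
def InV (x : (B → A) × Set ((B → A) × B) × B) : Prop :=
  (Function.mulSupport x.1).Finite ∧ ∀ p ∈ x.2.1, (Function.mulSupport p.1).Finite

/-- Regularity of `A ◊ᵥ B`. -/
def VReg (A B : Type*) [Monoid A] [Monoid B] : Prop :=
  ∀ x : (B → A) × Set ((B → A) × B) × B, InV x →
    ∃ y, InV y ∧ vMul (vMul x y) x = x ∧ vMul (vMul y x) y = y

end VSch

/-! Translation `h ↦ ᵘh` is multiplicative and `ᵘ(ʷh) = ᵘʷh`. Since `dbd = d`, the second equation is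
`vfv = v` translated by `d`. In the first, `ᵇ(ᵈv) = ᵇᵈv`, and writing `(x)f = a_x·(xbd)f` moves the
leading factor to the point `xbd`, where `fvf = f` applies. -/

section Translate
variable {A B : Type*} [Monoid B]

@[simp]
lemma tr_apply (u : B) (h : B → A) (x : B) : tr u h x = h (x * u) := rfl

lemma tr_mul [Mul A] (u : B) (g h : B → A) : tr u (g * h) = tr u g * tr u h := rfl

lemma tr_tr (u w : B) (h : B → A) : tr u (tr w h) = tr (u * w) h := by
  funext x
  simp only [tr_apply, mul_assoc]

lemma mul_tr_mul_tr_eq_self [Monoid A] {f v : B → A} {u : B} (hfu : ∀ x, ∃ a, f x = a * f (x * u))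
    (hfvf : f * v * f = f) : f * tr u v * tr u f = f := by
  funext x
  obtain ⟨a, hax⟩ := hfu x
  have hvu : f (x * u) * v (x * u) * f (x * u) = f (x * u) := congrFun hfvf (x * u)
  calc f x * v (x * u) * f (x * u) = a * (f (x * u) * v (x * u) * f (x * u)) := by
        rw [hax]; simp only [mul_assoc]
    _ = f x := by rw [hvu, hax]

end Translate

theorem translate_inverse_equations_general (A B : Type*) [Monoid A] [Monoid B]
    (f v : B → A)
    (b d : B) (hdb : d * b * d = d)
    (ha : ∀ x : B, ∃ a : A, f x = a * f (x * (b * d)))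
    (hfvf : f * v * f = f) (hvfv : v * f * v = v) :
    f * tr b (tr d v) * tr (b * d) f = f ∧
    tr d v * tr d f * tr (d * b) (tr d v) = tr d v := by
  constructor
  · rw [tr_tr]
    exact mul_tr_mul_tr_eq_self ha hfvf
  · rw [tr_tr, hdb, ← tr_mul, ← tr_mul, hvfv]

/-- With `g = ᵈv` one has `f·ᵇg·ᵇᵈf = f` and `g·ᵈf·ᵈᵇg = g`. -/
theorem translate_inverse_equations (A B : Type*) [Monoid A] [Monoid B]
    (f v : B → A)
    (hf : (Function.mulSupport f).Finite) (hv : (Function.mulSupport v).Finite)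
    (b d : B) (hbd : b * d * b = b) (hdb : d * b * d = d)
    (ha : ∀ x : B, ∃ a : A, f x = a * f (x * (b * d)))
    (hfvf : f * v * f = f) (hvfv : v * f * v = v) :
    f * tr b (tr d v) * tr (b * d) f = f ∧
    tr d v * tr d f * tr (d * b) (tr d v) = tr d v :=
  translate_inverse_equations_general A B f v b d hdb ha hfvf hvfv
end
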